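/- arXiv:1602.00592 — 2 statements merged into one kernel-verified Lean document; each statement's English description precedes it below -/
import Mathlib

section
/- Let B be a closed ball (with respect to the dual norm) in the dual space M = C_b(ℝ^d; ℝ^d)'. Then B, equipped with the metric d(ξ,ξ') = sup{(ξ-ξ')(θ) : ‖θ‖_∞ + Lip(θ) ≤ 1}, is a complete metric space. -/
/-!
A bounded Lipschitz field `θ` controls every current through
`|ξ θ| ≤ ‖ξ‖_BL (‖θ‖_∞ + Lip θ)`, so a sequence that is Cauchy for the bounded-Lipschitz
distance converges pointwise on the subspace of Lipschitz fields. Since the sequence stays in a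
ball of the dual norm, the pointwise limit is a linear functional on that subspace bounded by the
radius in the sup norm, and Hahn–Banach extends it to all of `C_b(ℝ^d; ℝ^d)` without increasing
its norm: this is the limit, and it lies in the ball. Convergence in the bounded-Lipschitz
distance then follows because that distance is lower semicontinuous under pointwise convergence on
Lipschitz fields.
-/

open BoundedContinuousFunction MeasureTheory Set Filter
open scoped NNReal

noncomputable section

/-- `ℝ^d`. -/
abbrev E (d : ℕ) := EuclideanSpace ℝ (Fin d)
/-- The Banach space `C_b(ℝ^d; ℝ^d)` of bounded continuous vector fields. -/
abbrev VF (d : ℕ) := E d →ᵇ E d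
/-- The space of 1-currents `M = C_b(ℝ^d;ℝ^d)'` with its dual norm `‖·‖ = |·|_M`. -/
abbrev Cur (d : ℕ) := StrongDual ℝ (VF d)

/-- The bounded-Lipschitz (weak) norm
`‖ξ‖ = sup { ξ(θ) : ‖θ‖_∞ + Lip(θ) ≤ 1 }` on 1-currents. -/
def blNorm {d : ℕ} (ξ : Cur d) : ℝ :=
  sSup { r : ℝ | ∃ θ : VF d, ∃ L : ℝ≥0, LipschitzWith L θ ∧ ‖θ‖ + (L : ℝ) ≤ 1 ∧ r = ξ θ }

section LipschitzSubmodule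

variable (𝕜 α β : Type*) [NormedField 𝕜] [PseudoMetricSpace α] [SeminormedAddCommGroup β]
  [NormedSpace 𝕜 β]

def lipschitzSubmodule : Submodule 𝕜 (α →ᵇ β) where
  carrier := {θ | ∃ L, LipschitzWith L θ}
  zero_mem' := ⟨0, LipschitzWith.const (0 : β)⟩
  add_mem' := fun ⟨_, hθ⟩ ⟨_, hθ'⟩ => ⟨_, hθ.add hθ'⟩
  smul_mem' := fun r _ ⟨_, hθ⟩ => ⟨_, (lipschitzWith_smul r).comp hθ⟩

end LipschitzSubmodule

theorem exists_norm_sub_le_tendsto_apply_of_tendsto {𝕜 V : Type*} [RCLike 𝕜]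
    [SeminormedAddCommGroup V] [NormedSpace 𝕜 V] (S : Submodule 𝕜 V)
    {v : ℕ → StrongDual 𝕜 V} {c : StrongDual 𝕜 V} {R : ℝ} (hv : ∀ n, ‖v n - c‖ ≤ R)
    (hS : ∀ x ∈ S, ∃ l, Tendsto (fun n => v n x) atTop (nhds l)) :
    ∃ ξ : StrongDual 𝕜 V, ‖ξ - c‖ ≤ R ∧ ∀ x ∈ S, Tendsto (fun n => v n x) atTop (nhds (ξ x)) := by
  set w : ℕ → StrongDual 𝕜 S := fun n => (v n - c).comp S.subtypeL
  have hw : ∀ x : S, ∃ l, Tendsto (fun n => w n x) atTop (nhds l) := fun x =>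
    let ⟨l, hl⟩ := hS x x.2
    ⟨l - c x, by simpa [w] using hl.sub_const (c x)⟩
  choose f hf using hw
  set F : S →ₗ[𝕜] 𝕜 := linearMapOfTendsto f (fun n => (w n : S →ₗ[𝕜] 𝕜)) (tendsto_pi_nhds.2 hf)
  have hF : ∀ x, ‖F x‖ ≤ R * ‖x‖ := fun x =>
    le_of_tendsto (hf x).norm <| Eventually.of_forall fun n =>
      ((v n - c).le_opNorm x).trans (mul_le_mul_of_nonneg_right (hv n) (norm_nonneg _))
  obtain ⟨η, hηF, hη⟩ := exists_extension_norm_eq S (F.mkContinuous R hF)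
  refine ⟨c + η, ?_, fun x hx => ?_⟩
  · rw [add_sub_cancel_left, hη]
    exact LinearMap.mkContinuous_norm_le _ ((norm_nonneg _).trans (hv 0)) _
  · have hηx : η x = f ⟨x, hx⟩ := hηF ⟨x, hx⟩
    simpa [w, hηx, add_comm] using (hf ⟨x, hx⟩).add_const (c x)

section blNorm

variable {d : ℕ}

theorem le_blNorm {ξ : Cur d} {θ : VF d} {L : ℝ≥0} (hL : LipschitzWith L θ)
    (hθ : ‖θ‖ + (L : ℝ) ≤ 1) : ξ θ ≤ blNorm ξ := by
  refine le_csSup ⟨‖ξ‖, ?_⟩ ⟨θ, L, hL, hθ, rfl⟩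
  rintro _ ⟨θ', L', -, hθ', rfl⟩
  have : ‖θ'‖ ≤ 1 := (le_add_of_nonneg_right L'.coe_nonneg).trans hθ'
  calc ξ θ' ≤ ‖ξ‖ * ‖θ'‖ := (le_abs_self _).trans (ξ.le_opNorm θ')
    _ ≤ ‖ξ‖ := mul_le_of_le_one_right (norm_nonneg ξ) this

theorem blNorm_nonneg (ξ : Cur d) : 0 ≤ blNorm ξ := by
  have := le_blNorm (ξ := ξ) (θ := 0) (LipschitzWith.const (0 : E d)) (by simp)
  rwa [map_zero] at this

theorem blNorm_le {ξ : Cur d} {b : ℝ}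
    (h : ∀ (θ : VF d) (L : ℝ≥0), LipschitzWith L θ → ‖θ‖ + (L : ℝ) ≤ 1 → ξ θ ≤ b) :
    blNorm ξ ≤ b :=
  csSup_le ⟨0, 0, 0, LipschitzWith.const (0 : E d), by simp, by simp⟩
    (by rintro _ ⟨θ, L, hL, hθ, rfl⟩; exact h θ L hL hθ)

theorem apply_le_blNorm_mul (ξ : Cur d) {θ : VF d} {L : ℝ≥0} (hL : LipschitzWith L θ) :
    ξ θ ≤ blNorm ξ * (‖θ‖ + L) := by
  set C : ℝ≥0 := ‖θ‖₊ + L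
  have hC : (C : ℝ) = ‖θ‖ + L := rfl
  rcases eq_or_ne C 0 with hC0 | hC0
  · have : θ = 0 := by
      rw [← nnnorm_eq_zero]; exact (add_eq_zero.1 hC0).1
    simp [this, mul_nonneg (blNorm_nonneg ξ)]
  have hlip : LipschitzWith (C⁻¹ * L) (((C⁻¹ : ℝ≥0) : ℝ) • θ) := by
    have := (lipschitzWith_smul ((C⁻¹ : ℝ≥0) : ℝ)).comp hL
    rwa [NNReal.nnnorm_eq] at this
  have hscaled : ‖((C⁻¹ : ℝ≥0) : ℝ) • θ‖ + ((C⁻¹ * L : ℝ≥0) : ℝ) = 1 := by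
    rw [norm_smul, NNReal.norm_eq, NNReal.coe_mul, ← mul_add, ← hC, ← NNReal.coe_mul,
      inv_mul_cancel₀ hC0, NNReal.coe_one]
  have := le_blNorm (ξ := ξ) hlip hscaled.le
  rw [map_smul, smul_eq_mul, NNReal.coe_inv, inv_mul_le_iff₀ (by positivity)] at this
  rwa [← hC, mul_comm]

theorem abs_apply_le_blNorm_mul (ξ : Cur d) {θ : VF d} {L : ℝ≥0} (hL : LipschitzWith L θ) :
    |ξ θ| ≤ blNorm ξ * (‖θ‖ + L) := by
  refine abs_le.2 ⟨?_, apply_le_blNorm_mul ξ hL⟩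
  have := apply_le_blNorm_mul ξ (θ := -θ) (by simpa using hL.neg)
  rw [map_neg, norm_neg] at this
  linarith

theorem cauchySeq_apply_of_blNorm {u : ℕ → Cur d}
    (hcauchy : ∀ ε > 0, ∃ N : ℕ, ∀ m ≥ N, ∀ n ≥ N, blNorm (u m - u n) < ε)
    {θ : VF d} {L : ℝ≥0} (hL : LipschitzWith L θ) : CauchySeq fun n => u n θ := by
  refine Metric.cauchySeq_iff.2 fun ε hε => ?_
  set C : ℝ := ‖θ‖ + L
  have hC : 0 ≤ C := by positivity
  obtain ⟨N, hN⟩ := hcauchy (ε / (C + 1)) (by positivity)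
  refine ⟨N, fun m hm n hn => ?_⟩
  calc dist (u m θ) (u n θ) = |(u m - u n) θ| := by simp [Real.dist_eq]
    _ ≤ blNorm (u m - u n) * C := abs_apply_le_blNorm_mul _ hL
    _ ≤ ε / (C + 1) * C := by gcongr; exact (hN m hm n hn).le
    _ < ε := by
      rw [div_mul_eq_mul_div, div_lt_iff₀ (by positivity)]
      nlinarith

theorem blNorm_le_of_tendsto {w : ℕ → Cur d} {ξ : Cur d} {ε : ℝ}
    (hw : ∀ᶠ m in atTop, blNorm (w m) ≤ ε)
    (hlim : ∀ (θ : VF d) (L : ℝ≥0), LipschitzWith L θ →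
      Tendsto (fun m => w m θ) atTop (nhds (ξ θ))) :
    blNorm ξ ≤ ε :=
  blNorm_le fun θ L hL hθ =>
    le_of_tendsto (hlim θ L hL) (hw.mono fun _ hm => (le_blNorm hL hθ).trans hm)

end blNorm

/-- A closed ball (w.r.t. the dual norm) in `M = C_b(ℝ^d;ℝ^d)'`,
equipped with the metric `d(ξ,ξ') = ‖ξ - ξ'‖` given by the bounded-Lipschitz norm,
is a complete metric space: every Cauchy sequence in the ball converges, in the
bounded-Lipschitz distance, to an element of the ball. -/
theorem closedBall_complete_blNorm {d : ℕ} (c : Cur d) (R : ℝ) (u : ℕ → Cur d)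
    (hu : ∀ n, ‖u n - c‖ ≤ R)
    (hcauchy : ∀ ε > 0, ∃ N : ℕ, ∀ m ≥ N, ∀ n ≥ N, blNorm (u m - u n) < ε) :
    ∃ ξ : Cur d, ‖ξ - c‖ ≤ R ∧
      Tendsto (fun n => blNorm (u n - ξ)) atTop (nhds 0) := by
  obtain ⟨ξ, hξR, hξ⟩ := exists_norm_sub_le_tendsto_apply_of_tendsto
    (lipschitzSubmodule ℝ (E d) (E d)) hu
    fun θ ⟨L, hL⟩ => cauchySeq_tendsto_of_complete (cauchySeq_apply_of_blNorm hcauchy hL)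
  refine ⟨ξ, hξR, tendsto_order.2 ⟨fun a ha => Eventually.of_forall fun n =>
    ha.trans_le (blNorm_nonneg _), fun ε hε => ?_⟩⟩
  obtain ⟨N, hN⟩ := hcauchy (ε / 2) (half_pos hε)
  filter_upwards [eventually_ge_atTop N] with n hn
  have : blNorm (u n - ξ) ≤ ε / 2 :=
    blNorm_le_of_tendsto ((eventually_ge_atTop N).mono fun m hm => (hN n hn m hm).le)
      fun θ L hL => by simpa using tendsto_const_nhds.sub (hξ θ ⟨L, hL⟩)
  linarith
end
end

section
/- Let ξ be a (deterministic) bounded linear functional on C_b(ℝ³,ℝ³) with |ξ|_M < ∞ and, for each N, let (γ^{1,N},…,γ^{N,N}) be an exchangeable family of random 1-currents with associated empirical current ξ^N = (1/N)Σ_j γ^{j,N}. Assume |γ^{i,N}(θ)| ≤ C almost surely uniformly in i,N, for every θ ∈ C_b(ℝ³,ℝ³), and E[|ξ^N(θ) − ξ(θ)|] → 0 as N → ∞ for each θ. Then for every r ∈ ℕ and test functions θ₁,…,θ_r ∈ C_b(ℝ³,ℝ³): lim_{N→∞} E[γ^{1,N}(θ₁)⋯γ^{r,N}(θ_r)] =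 Π_{i=1}^r ξ(θ_i) (propagation of chaos). -/
/-!
Induction on `r`. Put `g_N = γ^{1,N}(θ₁)⋯γ^{r,N}(θ_r)`. By exchangeability every
`E[g_N γ^{j,N}(θ)]` with `j > r` equals `E[g_N γ^{r+1,N}(θ)]`, so averaging over `j` gives
`N E[g_N ξ^N(θ)] = Σ_{j ≤ r} E[g_N γ^{j,N}(θ)] + (N - r) E[g_N γ^{r+1,N}(θ)]`, where the first
sum is bounded. Since `g_N` is bounded and `ξ^N(θ) → ξ(θ)` in `L¹`, `E[g_N ξ^N(θ)]` has the same
limit as `E[g_N] ξ(θ)`, which is `ξ(θ₁)⋯ξ(θ_r) ξ(θ)` by induction.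
-/

open BoundedContinuousFunction MeasureTheory Set Filter
open scoped NNReal

noncomputable section

open scoped Topology

lemma tendsto_of_natCast_mul_eq_add_sub_mul {a b s : ℕ → ℝ} {L : ℝ} (r : ℕ)
    (hb : Tendsto b atTop (𝓝 L)) (hs : IsBoundedUnder (· ≤ ·) atTop (norm ∘ s))
    (h : ∀ᶠ N : ℕ in atTop, (N : ℝ) * b N = s N + ((N : ℝ) - r) * a N) :
    Tendsto a atTop (𝓝 L) := by
  have hinv : Tendsto (fun N : ℕ => ((N : ℝ) - r)⁻¹) atTop (𝓝 0) :=
    (tendsto_atTop_add_const_right _ (-(r : ℝ)) tendsto_natCast_atTop_atTop).inv_tendsto_atTop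
  have hlim : Tendsto (fun N => b N + ((N : ℝ) - r)⁻¹ * r * b N - ((N : ℝ) - r)⁻¹ * s N)
      atTop (𝓝 L) := by
    simpa using (hb.add ((hinv.mul_const _).mul hb)).sub (hinv.zero_mul_isBoundedUnder_le hs)
  -- for `N > r`, `a N = b N + (r b N - s N) / (N - r)`
  refine hlim.congr' ?_
  filter_upwards [h, eventually_gt_atTop r] with N hN hrN
  have hpos : (0 : ℝ) < N - r := sub_pos.2 (by exact_mod_cast hrN)
  field_simp
  linarith

section Integrals

variable {Ω : Type*} [MeasurableSpace Ω] {P : Measure Ω}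

lemma ae_abs_prod_le {ι : Type*} (s : Finset ι) {f : ι → Ω → ℝ} {C : ι → ℝ}
    (hf : ∀ i ∈ s, ∀ᵐ ω ∂P, |f i ω| ≤ C i) :
    ∀ᵐ ω ∂P, |∏ i ∈ s, f i ω| ≤ ∏ i ∈ s, C i := by
  filter_upwards [(eventually_all_finset s).2 hf] with ω hω
  rw [Finset.abs_prod]
  exact Finset.prod_le_prod (fun i _ => abs_nonneg _) hω

lemma tendsto_integral_mul_of_tendsto_integral_abs_sub [IsFiniteMeasure P]
    {U g : ℕ → Ω → ℝ} {x y B : ℝ} (hU : ∀ N, Integrable (U N) P)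
    (hg : ∀ N, AEStronglyMeasurable (g N) P) (hgB : ∀ᶠ N in atTop, ∀ᵐ ω ∂P, |g N ω| ≤ B)
    (hUx : Tendsto (fun N => ∫ ω, |U N ω - x| ∂P) atTop (𝓝 0))
    (hgy : Tendsto (fun N => ∫ ω, g N ω ∂P) atTop (𝓝 y)) :
    Tendsto (fun N => ∫ ω, g N ω * U N ω ∂P) atTop (𝓝 (y * x)) := by
  have herr : Tendsto (fun N => ∫ ω, g N ω * (U N ω - x) ∂P) atTop (𝓝 0) := by
    refine squeeze_zero_norm' ?_ (by simpa using hUx.const_mul B)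
    filter_upwards [hgB] with N hN
    rw [← integral_const_mul]
    refine norm_integral_le_of_norm_le (((hU N).sub (integrable_const x)).abs.const_mul B) ?_
    filter_upwards [hN] with ω hω
    rw [norm_mul, Real.norm_eq_abs, Real.norm_eq_abs]
    exact mul_le_mul_of_nonneg_right hω (abs_nonneg _)
  refine (by simpa using herr.add (hgy.mul_const x) :
    Tendsto (fun N => ∫ ω, g N ω * (U N ω - x) ∂P + (∫ ω, g N ω ∂P) * x) atTop _).congr' ?_
  filter_upwards [hgB] with N hN
  have hgint : Integrable (g N) P := .of_bound (hg N) B (by simpa using hN)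
  rw [← integral_mul_const, ← integral_add]
  · simp_rw [mul_sub, sub_add_cancel]
  · exact ((hU N).sub (integrable_const x)).bdd_mul (hg N) (by simpa using hN)
  · exact hgint.mul_const x

end Integrals

section Exchangeable

variable {Ω α : Type*} [MeasurableSpace Ω]

def HasExchangeableMoments (P : Measure Ω) (N : ℕ) (Z : ℕ → Ω → α → ℝ) : Prop :=
  ∀ (r : ℕ) (θ : Fin r → α) (idx idx' : Fin r → ℕ), idx.Injective → idx'.Injective →
    (∀ k, idx k < N) → (∀ k, idx' k < N) →
    ∫ ω, ∏ k, Z (idx k) ω (θ k) ∂P = ∫ ω, ∏ k, Z (idx' k) ω (θ k) ∂P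

lemma HasExchangeableMoments.integral_prod_mul_eq {P : Measure Ω} {N : ℕ}
    {Z : ℕ → Ω → α → ℝ} (hZ : HasExchangeableMoments P N Z) {r j : ℕ} (θ : Fin (r + 1) → α)
    (hrj : r ≤ j) (hjN : j < N) :
    ∫ ω, (∏ k : Fin r, Z k ω (θ k.castSucc)) * Z j ω (θ (Fin.last r)) ∂P =
      ∫ ω, ∏ k : Fin (r + 1), Z k ω (θ k) ∂P := by
  have hswap (k : Fin r) : Equiv.swap r j k = k :=
    Equiv.swap_apply_of_ne_of_ne k.isLt.ne (k.isLt.trans_le hrj).ne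
  have hlt (k : Fin (r + 1)) : Equiv.swap r j k < N := by
    rw [Equiv.swap_apply_def]
    split_ifs <;> omega
  convert hZ (r + 1) θ (fun k => Equiv.swap r j k) (fun k => k)
    ((Equiv.swap r j).injective.comp Fin.val_injective) Fin.val_injective hlt
    (fun k => by omega) using 1
  refine integral_congr_ae (.of_forall fun ω => ?_)
  simp [Fin.prod_univ_castSucc, hswap]

end Exchangeable

section Averages

variable {Ω : Type*} [MeasurableSpace Ω] {P : Measure Ω}

lemma natCast_mul_integral_mul_average_eq {X : ℕ → Ω → ℝ} {g : Ω → ℝ} {a : ℝ} {r N : ℕ}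
    (hrN : r ≤ N) (hint : ∀ j < N, Integrable (fun ω => g ω * X j ω) P)
    (ha : ∀ j, r ≤ j → j < N → ∫ ω, g ω * X j ω ∂P = a) :
    (N : ℝ) * ∫ ω, g ω * ((N : ℝ)⁻¹ * ∑ j ∈ Finset.range N, X j ω) ∂P =
      ∑ j ∈ Finset.range r, ∫ ω, g ω * X j ω ∂P + ((N : ℝ) - r) * a := by
  have hsum : ∫ ω, ∑ j ∈ Finset.range N, g ω * X j ω ∂P =
      ∑ j ∈ Finset.range r, ∫ ω, g ω * X j ω ∂P + ((N : ℝ) - r) * a := by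
    rw [integral_finsetSum _ fun j hj => hint j (Finset.mem_range.1 hj),
      ← Finset.sum_range_add_sum_Ico _ hrN,
      Finset.sum_congr rfl fun j hj => ha j (Finset.mem_Ico.1 hj).1 (Finset.mem_Ico.1 hj).2,
      Finset.sum_const, Nat.card_Ico, nsmul_eq_mul, Nat.cast_sub hrN]
  rcases N.eq_zero_or_pos with rfl | hN
  · simp_all
  · simp_rw [← hsum, Finset.mul_sum, mul_left_comm (g _), ← Finset.mul_sum, integral_const_mul]
    field_simp

lemma tendsto_of_integral_mul_eq_of_tendsto_average [IsProbabilityMeasure P]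
    {X : ℕ → ℕ → Ω → ℝ} {g : ℕ → Ω → ℝ} {a : ℕ → ℝ} {x y : ℝ} (r : ℕ)
    (hX : ∀ N j, AEStronglyMeasurable (X N j) P)
    (hXC : ∃ C, ∀ N j, j < N → ∀ᵐ ω ∂P, |X N j ω| ≤ C)
    (hg : ∀ N, AEStronglyMeasurable (g N) P) (hgB : ∃ B, ∀ᶠ N in atTop, ∀ᵐ ω ∂P, |g N ω| ≤ B)
    (ha : ∀ N j, r ≤ j → j < N → ∫ ω, g N ω * X N j ω ∂P = a N)
    (hXx : Tendsto (fun N : ℕ => ∫ ω, |(N : ℝ)⁻¹ * ∑ j ∈ Finset.range N, X N j ω - x| ∂P)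
      atTop (𝓝 0))
    (hgy : Tendsto (fun N => ∫ ω, g N ω ∂P) atTop (𝓝 y)) :
    Tendsto a atTop (𝓝 (y * x)) := by
  obtain ⟨C, hC⟩ := hXC
  obtain ⟨B, hB⟩ := hgB
  have hXint (N j : ℕ) (hj : j < N) : Integrable (X N j) P :=
    .of_bound (hX N j) C (by simpa using hC N j hj)
  have hgXint : ∀ᶠ N in atTop, ∀ j < N, Integrable (fun ω => g N ω * X N j ω) P := by
    filter_upwards [hB] with N hN j hj
    exact (hXint N j hj).bdd_mul (hg N) (by simpa using hN)
  refine tendsto_of_natCast_mul_eq_add_sub_mul r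
    (s := fun N => ∑ j ∈ Finset.range r, ∫ ω, g N ω * X N j ω ∂P)
    (tendsto_integral_mul_of_tendsto_integral_abs_sub
      (fun N => (integrable_finsetSum _ fun j hj =>
        hXint N j (Finset.mem_range.1 hj)).const_mul _) hg hB hXx hgy) ?_ ?_
  · refine isBoundedUnder_of_eventually_le (a := r * (B * C)) ?_
    filter_upwards [hB, eventually_ge_atTop r] with N hN hrN
    calc ‖∑ j ∈ Finset.range r, ∫ ω, g N ω * X N j ω ∂P‖
        ≤ ∑ j ∈ Finset.range r, ‖∫ ω, g N ω * X N j ω ∂P‖ := norm_sum_le _ _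
      _ ≤ ∑ j ∈ Finset.range r, B * C := Finset.sum_le_sum fun j hj => by
          refine (norm_integral_le_of_norm_le (integrable_const (B * C)) ?_).trans (by simp)
          filter_upwards [hN, hC N j ((Finset.mem_range.1 hj).trans_le hrN)] with ω h1 h2
          rw [norm_mul, Real.norm_eq_abs, Real.norm_eq_abs]
          exact mul_le_mul h1 h2 (abs_nonneg _) ((abs_nonneg _).trans h1)
      _ = r * (B * C) := by simp
  · filter_upwards [hgXint, eventually_ge_atTop r] with N hN hrN
    exact natCast_mul_integral_mul_average_eq hrN hN (ha N)

end Averages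

/-- Propagation of chaos. Let `ξ ∈ M = C_b(ℝ³,ℝ³)'` and, for every
`N`, let `(γ^{1,N},…,γ^{N,N})` be an exchangeable family of random 1-currents
(exchangeability expressed through equality of all joint moments under relabelling of
distinct indices), with empirical current `ξ^N = (1/N) Σ_{j<N} γ^{j,N}`. Assume
`|γ^{i,N}(θ)| ≤ C` a.s. uniformly in `i,N` for every `θ`, and
`E[|ξ^N(θ) − ξ(θ)|] → 0` for every `θ`. Then for every `r` and test fields
`θ₁,…,θ_r`, `E[γ^{1,N}(θ₁)⋯γ^{r,N}(θ_r)] → ∏ᵢ ξ(θᵢ)`. -/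
theorem propagation_of_chaos {Ω : Type*} [MeasurableSpace Ω] (P : Measure Ω)
    [IsProbabilityMeasure P]
    (γ : ℕ → ℕ → Ω → Cur 3) (ξ : Cur 3) (ξN : ℕ → Ω → Cur 3)
    (hmeas : ∀ N i (θ : VF 3), AEStronglyMeasurable (fun ω => γ N i ω θ) P)
    (hexch : ∀ (N r : ℕ) (θ : Fin r → VF 3) (idx idx' : Fin r → ℕ),
      Function.Injective idx → Function.Injective idx' →
      (∀ k, idx k < N) → (∀ k, idx' k < N) →
      ∫ ω, ∏ k : Fin r, γ N (idx k) ω (θ k) ∂P =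
        ∫ ω, ∏ k : Fin r, γ N (idx' k) ω (θ k) ∂P)
    (hξN : ∀ N ω, ξN N ω = (N : ℝ)⁻¹ • ∑ j ∈ Finset.range N, γ N j ω)
    (hbound : ∀ θ : VF 3, ∃ C : ℝ, ∀ N i, i < N → ∀ᵐ ω ∂P, |γ N i ω θ| ≤ C)
    (hconv : ∀ θ : VF 3,
      Tendsto (fun N => ∫ ω, |ξN N ω θ - ξ θ| ∂P) atTop (nhds 0))
    (r : ℕ) (θ : Fin r → VF 3) :
    Tendsto (fun N => ∫ ω, ∏ k : Fin r, γ N k ω (θ k) ∂P) atTop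
      (nhds (∏ k : Fin r, ξ (θ k))) := by
  choose C hC using hbound
  have hξN_apply (N : ℕ) (ω : Ω) (φ : VF 3) :
      ξN N ω φ = (N : ℝ)⁻¹ * ∑ j ∈ Finset.range N, γ N j ω φ := by
    simp [hξN]
  induction r with
  | zero => simp
  | succ r ih =>
    rw [Fin.prod_univ_castSucc]
    have hZ (N : ℕ) : HasExchangeableMoments P N fun i ω φ => γ N i ω φ := hexch N
    refine tendsto_of_integral_mul_eq_of_tendsto_average r
      (X := fun N j ω => γ N j ω (θ (Fin.last r)))
      (g := fun N ω => ∏ k : Fin r, γ N k ω (θ k.castSucc)) (fun N j => hmeas N j _)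
      ⟨_, hC (θ (Fin.last r))⟩
      (fun N => Finset.aestronglyMeasurable_fun_prod _ fun k _ => hmeas N k _)
      ⟨∏ k : Fin r, C (θ k.castSucc), ?_⟩
      (fun N j hrj hjN => (hZ N).integral_prod_mul_eq θ hrj hjN)
      (by simpa only [hξN_apply] using hconv (θ (Fin.last r))) (ih _)
    filter_upwards [eventually_ge_atTop r] with N hrN
    exact ae_abs_prod_le _ fun k _ => hC _ N k (k.isLt.trans_le hrN)
end
end
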